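/- Let A, B ∈ Matrix (Fin n) (Fin n) ℂ and suppose u ≡ c is a constant scalar. Then the Volterra series solution of x' = Ax + c Bx with x(0)=x₀ sums to exp(t(A + cB)) x₀; equivalently, ∑_{k=0}^∞ cᵏ ∫_{0≤τ_k≤⋯≤τ₁≤t} e^{(t−τ₁)A} B e^{(τ₁−τ₂)A} B ⋯ B e^{τ_k A} dτ = exp(t(A+cB)). -/

import Mathlib

open MeasureTheory intervalIntegral

attribute [local instance] Matrix.linftyOpNormedRing Matrix.linftyOpNormedAlgebra
  Matrix.linftyOpNormedSpace

/-- The matrix-valued `k`-th Volterra (Dyson/Peano–Baker) term for the time-independent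
perturbation: `T 0 t = e^{tA}` and `T (k+1) t = ∫₀ᵗ e^{(t-τ)A} B (T k τ) dτ`, i.e. the
iterated integral over the ordered simplex `{0 ≤ τ_k ≤ ⋯ ≤ τ₁ ≤ t}` of
`e^{(t-τ₁)A} B e^{(τ₁-τ₂)A} B ⋯ B e^{τ_k A}`. -/
noncomputable def dysonTerm {n : ℕ} (A B : Matrix (Fin n) (Fin n) ℂ) :
    ℕ → ℝ → Matrix (Fin n) (Fin n) ℂ
  | 0, t => NormedSpace.exp (t • A)
  | k + 1, t => ∫ τ in (0:ℝ)..t, NormedSpace.exp ((t - τ) • A) * B * dysonTerm A B k τ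

/-!
Write `V f t = ∫₀ᵗ e^{(t-τ)A} B f(τ) dτ`, so that the `k`-th Dyson term is `Vᵏ e^{·A}`.
Differentiating `τ ↦ e^{(t-τ)A} e^{τ(A+B)}` gives Duhamel's formula
`e^{·(A+B)} = e^{·A} + V e^{·(A+B)}`; since `V` is additive, iterating it yields
`e^{t(A+B)} = ∑_{k<N} Vᵏ e^{·A} (t) + Vᴺ e^{·(A+B)} (t)`. If `‖g‖ ≤ C` on `[0, t]` and
`‖e^{sA}‖ ≤ K` for `|s| ≤ |t|`, then `‖Vᵏ g (t)‖ ≤ C (K‖B‖|t|)ᵏ / k!`, so the series converges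
absolutely and the remainder tends to zero. The perturbation `cB` enters only through `dysonTerm A (c • B) k = cᵏ • dysonTerm A B k`.
-/

open NormedSpace Set Nat Filter Topology
open scoped Interval

section Volterra

variable {𝔸 : Type*} [NormedRing 𝔸] [NormedAlgebra ℝ 𝔸]

noncomputable def volterra (A B : 𝔸) (f : ℝ → 𝔸) (t : ℝ) : 𝔸 :=
  ∫ τ in (0 : ℝ)..t, exp ((t - τ) • A) * B * f τ

variable (A B : 𝔸) {f g : ℝ → 𝔸}

theorem norm_iterate_volterra_le {t C K : ℝ} (hC : ∀ τ ∈ [[0, t]], ‖f τ‖ ≤ C)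
    (hK : ∀ s, |s| ≤ |t| → ‖exp (s • A)‖ ≤ K) (k : ℕ) :
    ∀ τ ∈ [[0, t]], ‖(volterra A B)^[k] f τ‖ ≤ C * (K * ‖B‖) ^ k * |τ| ^ k / k ! := by
  have hK₀ : 0 ≤ K := (norm_nonneg _).trans (hK 0 (by simp))
  induction k with
  | zero => simpa using hC
  | succ k ih =>
    intro τ hτ
    have hbound : ∀ σ ∈ Ι 0 τ, ‖exp ((τ - σ) • A) * B * (volterra A B)^[k] f σ‖
        ≤ C * (K * ‖B‖) ^ (k + 1) / k ! * |σ - 0| ^ k := by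
      intro σ hσ
      have hσ : σ ∈ [[0, t]] := uIcc_subset_uIcc left_mem_uIcc hτ (uIoc_subset_uIcc hσ)
      have hτσ : |τ - σ| ≤ |t| := by
        simpa using abs_sub_le_of_uIcc_subset_uIcc (uIcc_subset_uIcc hσ hτ)
      calc ‖exp ((τ - σ) • A) * B * (volterra A B)^[k] f σ‖
          ≤ ‖exp ((τ - σ) • A)‖ * ‖B‖ * ‖(volterra A B)^[k] f σ‖ := norm_mul₃_le
        _ ≤ K * ‖B‖ * (C * (K * ‖B‖) ^ k * |σ| ^ k / k !) := by
          gcongr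
          exacts [hK _ hτσ, ih σ hσ]
        _ = C * (K * ‖B‖) ^ (k + 1) / k ! * |σ - 0| ^ k := by rw [sub_zero]; ring
    calc ‖(volterra A B)^[k + 1] f τ‖
        ≤ ∫ σ in Ι 0 τ, ‖exp ((τ - σ) • A) * B * (volterra A B)^[k] f σ‖ := by
          rw [Function.iterate_succ_apply']
          exact norm_integral_le_integral_norm_uIoc
      _ ≤ ∫ σ in Ι 0 τ, C * (K * ‖B‖) ^ (k + 1) / k ! * |σ - 0| ^ k :=
          integral_mono_of_nonneg (ae_of_all _ fun _ => norm_nonneg _)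
            (Continuous.integrableOn_uIoc (by fun_prop))
            (ae_restrict_of_forall_mem measurableSet_uIoc hbound)
      _ = C * (K * ‖B‖) ^ (k + 1) * |τ| ^ (k + 1) / (k + 1)! := by
          rw [MeasureTheory.integral_const_mul, integral_pow_abs_sub_uIoc, sub_zero,
            factorial_succ]
          push_cast
          field_simp

variable [CompleteSpace 𝔸]

theorem continuous_exp_smul : Continuous fun s : ℝ => exp (s • A) :=
  continuous_iff_continuousAt.2 fun s => (hasDerivAt_exp_smul_const A s).continuousAt

theorem continuous_volterra_integrand (hf : Continuous f) (t : ℝ) :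
    Continuous fun τ => exp ((t - τ) • A) * B * f τ :=
  (((continuous_exp_smul A).comp (continuous_const.sub continuous_id)).mul
    continuous_const).mul hf

theorem continuous_volterra (hf : Continuous f) : Continuous (volterra A B f) :=
  continuous_parametric_intervalIntegral_of_continuous
    ((((continuous_exp_smul A).comp (continuous_fst.sub continuous_snd)).mul
      continuous_const).mul (hf.comp continuous_snd)) continuous_id

theorem continuous_iterate_volterra (hf : Continuous f) (k : ℕ) :
    Continuous ((volterra A B)^[k] f) := by
  induction k with
  | zero => exact hf
  | succ k ih =>
    rw [Function.iterate_succ_apply']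
    exact continuous_volterra A B ih

theorem volterra_add (hf : Continuous f) (hg : Continuous g) :
    volterra A B (f + g) = volterra A B f + volterra A B g := by
  ext t
  simp only [volterra, Pi.add_apply, mul_add]
  exact integral_add ((continuous_volterra_integrand A B hf t).intervalIntegrable 0 t)
    ((continuous_volterra_integrand A B hg t).intervalIntegrable 0 t)

theorem iterate_volterra_add (hf : Continuous f) (hg : Continuous g) (k : ℕ) :
    (volterra A B)^[k] (f + g) = (volterra A B)^[k] f + (volterra A B)^[k] g := by
  induction k with
  | zero => rfl
  | succ k ih =>
    simp only [Function.iterate_succ_apply', ih]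
    exact volterra_add A B (continuous_iterate_volterra A B hf k)
      (continuous_iterate_volterra A B hg k)

theorem exp_smul_add_eq_add_volterra (t : ℝ) :
    exp (t • (A + B)) = exp (t • A) + volterra A B (fun τ => exp (τ • (A + B))) t := by
  have hderiv : ∀ τ : ℝ, HasDerivAt (fun σ : ℝ => exp ((t - σ) • A) * exp (σ • (A + B)))
      (exp ((t - τ) • A) * B * exp (τ • (A + B))) τ := by
    intro τ
    have hleft := (hasDerivAt_exp_smul_const A (t - τ)).scomp τ ((hasDerivAt_id τ).const_sub t)
    convert hleft.mul (hasDerivAt_exp_smul_const' (A + B) τ) using 1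
    · rfl
    · simp only [Function.comp_apply, neg_one_smul, neg_mul, mul_add, add_mul, mul_assoc]
      abel
  have hftc := integral_eq_sub_of_hasDerivAt (fun τ _ => hderiv τ)
    ((continuous_volterra_integrand A B (continuous_exp_smul (A + B)) t).intervalIntegrable 0 t)
  simp only [sub_self, sub_zero, zero_smul, exp_zero, one_mul, mul_one] at hftc
  rw [volterra, hftc]
  abel

theorem exp_smul_add_eq_sum_iterate_volterra_add (N : ℕ) :
    (fun s : ℝ => exp (s • (A + B))) =
      ∑ k ∈ Finset.range N, (volterra A B)^[k] (fun s => exp (s • A)) +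
        (volterra A B)^[N] (fun s => exp (s • (A + B))) := by
  have hduhamel : (fun s : ℝ => exp (s • (A + B)))
      = (fun s => exp (s • A)) + volterra A B (fun s => exp (s • (A + B))) :=
    funext (exp_smul_add_eq_add_volterra A B)
  induction N with
  | zero => simp
  | succ N ih =>
    conv_lhs => rw [ih]
    nth_rw 1 [hduhamel]
    rw [iterate_volterra_add A B (continuous_exp_smul A)
      (continuous_volterra A B (continuous_exp_smul (A + B))), ← Function.iterate_succ_apply,
      Finset.sum_range_succ, add_assoc]

theorem exists_norm_iterate_volterra_le (hf : Continuous f) (t : ℝ) :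
    ∃ C x : ℝ, ∀ k, ‖(volterra A B)^[k] f t‖ ≤ C * (x ^ k / k !) := by
  obtain ⟨K, hK⟩ := (isCompact_Icc (a := -|t|) (b := |t|)).exists_bound_of_continuousOn
    (continuous_exp_smul A).continuousOn
  obtain ⟨C, hC⟩ := (isCompact_uIcc (a := 0) (b := t)).exists_bound_of_continuousOn
    hf.continuousOn
  refine ⟨C, K * ‖B‖ * |t|, fun k => ?_⟩
  have := norm_iterate_volterra_le A B hC (fun s hs => hK s (abs_le.1 hs)) k t right_mem_uIcc
  rwa [mul_pow, ← mul_div_assoc, ← mul_assoc]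

theorem hasSum_iterate_volterra (t : ℝ) :
    HasSum (fun k => (volterra A B)^[k] (fun s => exp (s • A)) t) (exp (t • (A + B))) := by
  have hsummable : Summable fun k => (volterra A B)^[k] (fun s => exp (s • A)) t := by
    obtain ⟨C, x, h⟩ := exists_norm_iterate_volterra_le A B (continuous_exp_smul A) t
    exact .of_norm_bounded ((Real.summable_pow_div_factorial x).mul_left C) h
  have hremainder :
      Tendsto (fun N => (volterra A B)^[N] (fun s => exp (s • (A + B))) t) atTop (𝓝 0) := by
    obtain ⟨C, x, h⟩ := exists_norm_iterate_volterra_le A B (continuous_exp_smul (A + B)) t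
    exact squeeze_zero_norm h
      (by simpa using (FloorSemiring.tendsto_pow_div_factorial_atTop x).const_mul C)
  rw [hsummable.hasSum_iff_tendsto_nat]
  refine (by simpa using tendsto_const_nhds.sub hremainder :
    Tendsto (fun N => exp (t • (A + B)) - (volterra A B)^[N] (fun s => exp (s • (A + B))) t)
      atTop (𝓝 (exp (t • (A + B))))).congr fun N => ?_
  have htelescope := congrFun (exp_smul_add_eq_sum_iterate_volterra_add A B N) t
  simp only [Pi.add_apply, Finset.sum_apply] at htelescope
  rw [sub_eq_iff_eq_add, ← htelescope]

end Volterra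

theorem dysonTerm_eq_iterate_volterra {n : ℕ} (A B : Matrix (Fin n) (Fin n) ℂ) (k : ℕ) :
    dysonTerm A B k = (volterra A B)^[k] (fun t => exp (t • A)) := by
  induction k with
  | zero => rfl
  | succ k ih =>
    rw [Function.iterate_succ_apply', ← ih]
    rfl

theorem dysonTerm_smul_right {n : ℕ} (A B : Matrix (Fin n) (Fin n) ℂ) (c : ℂ) (k : ℕ) (t : ℝ) :
    dysonTerm A (c • B) k t = c ^ k • dysonTerm A B k t := by
  induction k generalizing t with
  | zero => simp [dysonTerm]
  | succ k ih =>
    simp only [dysonTerm, ih, mul_smul_comm, smul_mul_assoc, smul_smul,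
      intervalIntegral.integral_smul, _root_.pow_succ]

/-- **The Volterra series with constant input sums to the exponential of `A + cB`:**
`∑ₖ cᵏ ∫_{0≤τ_k≤⋯≤τ₁≤t} e^{(t-τ₁)A} B ⋯ B e^{τ_k A} dτ = exp (t (A + c B))`. -/
theorem stmt_18 {n : ℕ} (A B : Matrix (Fin n) (Fin n) ℂ) (c : ℂ) (t : ℝ) :
    ∑' k : ℕ, c ^ k • dysonTerm A B k t = NormedSpace.exp (t • (A + c • B)) := by
  simp_rw [← dysonTerm_smul_right, dysonTerm_eq_iterate_volterra]
  exact (hasSum_iterate_volterra A (c • B) t).tsum_eq
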